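/- (Corollary 4: power scaling 1/(MN), no user aligned.) Let (M_t) and (N_t) be sequences of positive integers tending to infinity, fix E_u > 0 and set p_i(t) = E_u/(M_tN_t) for every i. Suppose there is C > 0 with |f_i(t)| ≤ C for all i and all t, and |b_{ki}(t)|/N_t → 0 for every i ≠ k. Then R̃_k(t) → log₂( 1 + ((ρ²/δ²)(μ_k+δ+1)² + μ_k + 1 − ρ²μ_k) / ( Σ_{i≠k} (α_i(μ_k+1)/(α_k(μ_i+1)))(μ_i+1−ρ²μ_i) + (σ_RF²+σ²)(μ_k+δ+1)(δ+1)(μ_k+1)/(E_uι²κ²τβα_kδ²) ) ) as t → ∞. -/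

import Mathlib

open MeasureTheory ProbabilityTheory Filter Finset

noncomputable section
/-- Coefficient `c_{k,1}`. -/
def ck1 (N : ℕ) (μk δ ρ : ℝ) (fk : ℂ) : ℝ :=
  (ρ^2*(μk+δ+1)^2 + (1-ρ^2)*δ^2*μk + δ^2) * (N:ℝ)^2
  + (((2*μk+3*δ+2-δ*μk)*ρ^2 + (1+μk)*δ) * δ*μk*‖fk‖^2
     + (μk+δ+2)^2 - ρ^2*(μk+δ+1)^2 - 2*ρ^2*δ*μk - 2) * (N:ℝ)
  + ρ^2*δ^2*μk^2*‖fk‖^4 + 2*((1-ρ^2)*(μk+δ)+2)*δ*μk*‖fk‖^2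

/-- Coefficient `c_{k,2}`. -/
def ck2 (μk δ ρ ι : ℝ) : ℝ :=
  ((1-ι^2)*(μk+δ+1)^2 - δ*μk*(μk+1+δ-ι^2*δ))*ρ^2 + (δ+μk+1)*δ*μk + (μk+δ+1)^2
  - (μk+1)*ι^2*δ^2

/-- Coefficient `c_{k,3}`. -/
def ck3 (μk δ ρ ι : ℝ) (fk : ℂ) : ℝ :=
  (((3-2*ι^2)*(μk+1) + (ι^2-1)*δ*(μk-3))*ρ^2 + (δ+1-ι^2*δ)*(μk+1)) * δ*μk*‖fk‖^2
  + ((ι^2-1)*(μk+δ+1)^2 + 2*(ι^2-2)*μk*δ)*ρ^2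
  + (1-ι^2)*(μk+δ+2)^2 + 2*μk*δ + 2*μk + 2*δ - 1 - 2*ι^2

/-- Coefficient `c_{k,4}`. -/
def ck4 (μk δ ρ ι : ℝ) (fk : ℂ) : ℝ :=
  (1-ι^2)*ρ^2*δ^2*μk^2*‖fk‖^4
  + 2*δ*μk*‖fk‖^2*((1-ι^2)*(1-ρ^2)*(μk+δ+1) + (2-ι^2)*(1+ρ^2))

/-- The closed-form second moment `ξ_k`. -/
def xiK (M N : ℕ) (αk μk β δ ρ ι κ : ℝ) (fk : ℂ) : ℝ :=
  (β^2*αk^2*κ^2*(M:ℝ)/((δ+1)^2*(μk+1)^2))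
    * (ck1 N μk δ ρ fk * ι^2 * (M:ℝ) + ck2 μk δ ρ ι * (N:ℝ)^2 + ck3 μk δ ρ ι fk * (N:ℝ)
       + ck4 μk δ ρ ι fk)

/-- Coefficient `z_{ki,1}`. -/
def zki1 (N : ℕ) (μk μi δ ρ : ℝ) (fk fi bki : ℂ) : ℝ :=
  (μi+1-ρ^2*μi)*δ^2*(N:ℝ)^2
  + ((μi+1-ρ^2*μi)*δ^2*μk*‖fk‖^2 + ρ^2*δ^2*μi*‖fi‖^2
     + (μk+2*δ+1)*(μi+1-ρ^2*μi) + ρ^2*μi) * (N:ℝ)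
  + (2*δ*‖fi‖^2 + μk*‖bki‖^2
     + 2*δ*μk*((starRingEnd ℂ) fk * fi * (starRingEnd ℂ) bki).re)*ρ^2*μi
  + (ρ^2*δ*μi*‖fi‖^2 + 2*μi*(1-ρ^2) + 2)*δ*μk*‖fk‖^2

/-- Coefficient `z_{ki,2}`. -/
def zki2 (μk μi δ ρ ι : ℝ) : ℝ :=
  ((δ+1)*μk + (δ+1)^2 - ι^2*δ^2)*(μi+1) - (μk+δ+1-ι^2*δ)*ρ^2*δ*μi - 1

/-- Coefficient `z_{ki,3}`. -/
def zki3 (μk μi δ ρ ι : ℝ) (fk fi : ℂ) : ℝ :=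
  ((1-ι^2)*δ*(μi+1-ρ^2*μi) + μi+1)*δ*μk*‖fk‖^2
  + ((μi+1)*(μk+2*δ+1) - (μk+2*δ)*ρ^2*μi)*(1-ι^2)
  + (μk+δ+1-ι^2*δ)*ρ^2*δ*μi*‖fi‖^2

/-- Coefficient `z_{ki,4}`. -/
def zki4 (μk μi δ ρ ι : ℝ) (fk fi bki : ℂ) : ℝ :=
  ((δ*‖fi‖^2-2)*ρ^2*μi + 2*μi + 2)*(1-ι^2)*δ*μk*‖fk‖^2
  + (1-ι^2)*ρ^2*μk*μi*(‖bki‖^2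
     + 2*δ*((starRingEnd ℂ) fk * fi * (starRingEnd ℂ) bki).re)
  + 2*(1-ι^2)*ρ^2*δ*μi*‖fi‖^2

/-- The closed-form interference second moment `γ_{ki}`. -/
def gammaKI (M N : ℕ) (αk αi μk μi β δ ρ ι κ : ℝ) (fk fi bki : ℂ) : ℝ :=
  (κ^2*β^2*αk*αi*(M:ℝ)/((δ+1)^2*(μk+1)*(μi+1)))
    * (zki1 N μk μi δ ρ fk fi bki * ι^2 * (M:ℝ) + zki2 μk μi δ ρ ι * (N:ℝ)^2
       + zki3 μk μi δ ρ ι fk fi * (N:ℝ) + zki4 μk μi δ ρ ι fk fi bki)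

/-- The quantity `ϖ_k`. -/
def varpiK (N : ℕ) (αk μk β δ : ℝ) (fk : ℂ) : ℝ :=
  (β*αk/((δ+1)*(μk+1))) * (δ*μk*‖fk‖^2 + (μk+δ+1)*(N:ℝ))

/-- The quantity `ζ`. -/
def zetaV (K N : ℕ) (p α μ : Fin K → ℝ) (β δ ρ κ : ℝ) (f : Fin K → ℂ) : ℝ :=
  ∑ s, (κ^2 * p s * β * α s / ((δ+1)*(μ s + 1)))
    * (ρ^2*δ*(μ s)*‖f s‖^2 + ((1-ρ^2)*δ*(μ s) + δ + μ s + 1)*(N:ℝ))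

/-- The closed-form approximate rate `R̃_k`. -/
def Rtilde (K : ℕ) (k : Fin K) (M N : ℕ) (p α μ : Fin K → ℝ)
    (β δ ρ ι κ τ σ2 σRF2 : ℝ) (f : Fin K → ℂ) (b : Fin K → ℂ) : ℝ :=
  Real.logb 2 (1 + p k * τ^2 * xiK M N (α k) (μ k) β δ ρ ι κ (f k) /
    ((∑ i ∈ Finset.univ.erase k,
        p i * τ^2 * gammaKI M N (α k) (α i) (μ k) (μ i) β δ ρ ι κ (f k) (f i) (b i))
     + τ*(1-τ) * varpiK N (α k) (μ k) β δ (f k) * zetaV K N p α μ β δ ρ κ f * (M:ℝ)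
     + τ*(σRF2+σ2) * varpiK N (α k) (μ k) β δ (f k) * (M:ℝ)))

/-- The coefficient `Γ_k` of Corollary 3 / the power scaling law. -/
def GammaK (N : ℕ) (αk μk β δ ρ ι κ τ : ℝ) (fk : ℂ) : ℝ :=
  τ^2*ι^2*κ^2*β^2*αk^2 * ck1 N μk δ ρ fk / ((δ+1)^2*(μk+1)^2)

/-- The coefficient `Γ_{ki}` of Corollary 3 / the power scaling law. -/
def GammaKI (N : ℕ) (αk αi μk μi β δ ρ ι κ τ : ℝ) (fk fi bki : ℂ) : ℝ :=
  τ^2*ι^2*κ^2*β^2*αk*αi * zki1 N μk μi δ ρ fk fi bki / ((δ+1)^2*(μk+1)*(μi+1))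

/-!
With `p_i = E_u/(MN)` we divide the signal and the interference-plus-noise terms of `R̃_k` by
`MN`. Every closed-form moment is a polynomial in `M` and `N` whose coefficients are continuous
functions of the bounded `f_i`, hence bounded, except for `|b_{ki}|²` and
`Re(conj f_k f_i conj b_{ki})`, which are `o(N²)` because `|b_{ki}|/N → 0`. So after the division
only the `M²N²` parts of `ξ_k` and `γ_{ki}` and the `MN` part of the noise term `ϖ_k M` survive,
while `ϖ_k ζ M/(MN) → 0` because `ζ = O(1/M)`.
-/

open Asymptotics Topology ComplexConjugate

section

variable {T : Type*} {l : Filter T}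

lemma isLittleO_one_of_tendsto_atTop {g : T → ℝ} (hg : Tendsto g l atTop) :
    (fun _ => (1 : ℝ)) =o[l] g :=
  (isLittleO_one_left_iff ℝ).2 (tendsto_norm_atTop_atTop.comp hg)

lemma isBigO_one_comp_of_norm_le {E : Type*} [NormedAddCommGroup E] [ProperSpace E]
    {x : T → E} {C : ℝ} (hx : ∀ t, ‖x t‖ ≤ C) {φ : E → ℝ} (hφ : Continuous φ) :
    (fun t => φ (x t)) =O[l] fun _ => (1 : ℝ) := by
  obtain ⟨B, hB⟩ :=
    (isCompact_closedBall (0 : E) C).exists_bound_of_continuousOn hφ.continuousOn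
  refine IsBigO.of_bound B (Eventually.of_forall fun t => ?_)
  simpa using hB (x t) (mem_closedBall_zero_iff.2 (hx t))

variable {n : T → ℝ}

lemma tendsto_add_const_mul_div (c : ℝ) (hn : Tendsto n l atTop) {g : T → ℝ}
    (hg : g =o[l] n) : Tendsto (fun t => (g t + c * n t) / n t) l (𝓝 c) := by
  have h := hg.tendsto_div_nhds_zero.add_const c
  rw [zero_add] at h
  refine h.congr' ?_
  filter_upwards [hn.eventually_ne_atTop 0] with t ht
  rw [add_div, mul_div_cancel_right₀ _ ht]

lemma tendsto_quadratic_div_sq (A : ℝ) (hn : Tendsto n l atTop) {B C : T → ℝ}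
    (hB : B =o[l] n) (hC : C =o[l] fun t => n t ^ 2) :
    Tendsto (fun t => (A * n t ^ 2 + B t * n t + C t) / n t ^ 2) l (𝓝 A) := by
  have hBn : (fun t => B t * n t) =o[l] fun t => n t ^ 2 := by
    simpa only [sq] using hB.mul_isBigO (isBigO_refl n l)
  refine (tendsto_add_const_mul_div A ((tendsto_pow_atTop two_ne_zero).comp hn)
    (hBn.add hC)).congr fun t => ?_
  simp only [Function.comp_apply]
  ring

lemma tendsto_mul_add_div_mul {m : T → ℝ} (hm : Tendsto m l atTop) {a b : T → ℝ} {L L' : ℝ}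
    (ha : Tendsto (fun t => a t / n t ^ 2) l (𝓝 L))
    (hb : Tendsto (fun t => b t / n t ^ 2) l (𝓝 L')) :
    Tendsto (fun t => (a t * m t + b t) / (m t * n t ^ 2)) l (𝓝 L) := by
  have h := ha.add (hb.mul (tendsto_inv_atTop_zero.comp hm))
  rw [mul_zero, add_zero] at h
  refine h.congr' ?_
  filter_upwards [hm.eventually_ne_atTop 0] with t ht
  simp only [Function.comp_apply]
  rw [add_div, mul_comm (m t), mul_div_mul_right _ _ ht]
  ring

lemma isLittleO_of_tendsto_norm_div {E : Type*} [NormedAddCommGroup E] {b : T → E}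
    (hn : Tendsto n l atTop) (hb : Tendsto (fun t => ‖b t‖ / n t) l (𝓝 0)) : b =o[l] n :=
  ((isLittleO_iff_tendsto' (hn.eventually_ne_atTop 0 |>.mono fun _ hn0 h => absurd h hn0)).2
    hb).of_norm_left

lemma isBigO_self_sq (hn : Tendsto n l atTop) :
    n =O[l] fun t => n t ^ 2 := by
  refine IsBigO.of_bound 1 ?_
  filter_upwards [hn.eventually_ge_atTop 1] with t ht
  rw [one_mul, Real.norm_of_nonneg (by linarith), Real.norm_of_nonneg (by positivity)]
  nlinarith

lemma isLittleO_norm_sq_add_re_conj_mul (hn : Tendsto n l atTop) {u v b : T → ℂ} {C : ℝ}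
    (hu : ∀ t, ‖u t‖ ≤ C) (hv : ∀ t, ‖v t‖ ≤ C) (hb : b =o[l] n) (c : ℝ) :
    (fun t => ‖b t‖ ^ 2 + c * (conj (u t) * v t * conj (b t)).re) =o[l] fun t => n t ^ 2 := by
  have hre : (fun t => (conj (u t) * v t * conj (b t)).re) =O[l] b := by
    refine IsBigO.of_bound (C * C) (Eventually.of_forall fun t => ?_)
    have hC : 0 ≤ C := (norm_nonneg _).trans (hu t)
    calc ‖(conj (u t) * v t * conj (b t)).re‖ ≤ ‖conj (u t) * v t * conj (b t)‖ :=
          Complex.abs_re_le_norm _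
      _ = ‖u t‖ * ‖v t‖ * ‖b t‖ := by simp
      _ ≤ C * C * ‖b t‖ := by gcongr; exacts [hu t, hv t]
  exact (hb.norm_left.pow two_pos).add
    ((hre.trans_isLittleO (hb.trans_isBigO (isBigO_self_sq hn))).const_mul_left c)

lemma tendsto_div_of_tendsto_div {S D c : T → ℝ} {s d : ℝ}
    (hS : Tendsto (fun t => S t / c t) l (𝓝 s)) (hD : Tendsto (fun t => D t / c t) l (𝓝 d))
    (hd : d ≠ 0) (hc : ∀ᶠ t in l, c t ≠ 0) : Tendsto (fun t => S t / D t) l (𝓝 (s / d)) :=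
  (hS.div hD hd).congr' (hc.mono fun _ ht => div_div_div_cancel_right₀ ht _ _)

end

section

variable {T : Type*} {l : Filter T} {N M : T → ℕ}

lemma tendsto_ck1_div_sq (hN : Tendsto N l atTop) (μk δ ρ : ℝ) {f : T → ℂ} {C : ℝ}
    (hf : ∀ t, ‖f t‖ ≤ C) :
    Tendsto (fun t => ck1 (N t) μk δ ρ (f t) / (N t : ℝ) ^ 2) l
      (𝓝 (ρ^2*(μk+δ+1)^2 + (1-ρ^2)*δ^2*μk + δ^2)) := by
  have hn : Tendsto (fun t => (N t : ℝ)) l atTop := tendsto_natCast_atTop_atTop.comp hN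
  have hB := isBigO_one_comp_of_norm_le (l := l) hf (φ := fun z =>
    ((2*μk+3*δ+2-δ*μk)*ρ^2 + (1+μk)*δ) * δ*μk*‖z‖^2
      + (μk+δ+2)^2 - ρ^2*(μk+δ+1)^2 - 2*ρ^2*δ*μk - 2) (by fun_prop)
  have hC := isBigO_one_comp_of_norm_le (l := l) hf (φ := fun z =>
    ρ^2*δ^2*μk^2*‖z‖^4 + 2*((1-ρ^2)*(μk+δ)+2)*δ*μk*‖z‖^2) (by fun_prop)
  refine (tendsto_quadratic_div_sq _ hn (hB.trans_isLittleO (isLittleO_one_of_tendsto_atTop hn))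
    (hC.trans_isLittleO (isLittleO_one_of_tendsto_atTop
      ((tendsto_pow_atTop two_ne_zero).comp hn)))).congr fun t => ?_
  simp only [ck1]
  ring

lemma tendsto_zki1_div_sq (hN : Tendsto N l atTop) (μk μi δ ρ : ℝ) {u v b : T → ℂ} {C : ℝ}
    (hu : ∀ t, ‖u t‖ ≤ C) (hv : ∀ t, ‖v t‖ ≤ C) (hb : b =o[l] fun t => (N t : ℝ)) :
    Tendsto (fun t => zki1 (N t) μk μi δ ρ (u t) (v t) (b t) / (N t : ℝ) ^ 2) l
      (𝓝 ((μi+1-ρ^2*μi)*δ^2)) := by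
  have hn : Tendsto (fun t => (N t : ℝ)) l atTop := tendsto_natCast_atTop_atTop.comp hN
  have huv : ∀ t, ‖(u t, v t)‖ ≤ C := fun t => norm_prod_le_iff.2 ⟨hu t, hv t⟩
  have hB := isBigO_one_comp_of_norm_le (l := l) huv (φ := fun z =>
    (μi+1-ρ^2*μi)*δ^2*μk*‖z.1‖^2 + ρ^2*δ^2*μi*‖z.2‖^2
      + (μk+2*δ+1)*(μi+1-ρ^2*μi) + ρ^2*μi) (by fun_prop)
  have hC := isBigO_one_comp_of_norm_le (l := l) huv (φ := fun z =>
    2*δ*‖z.2‖^2*ρ^2*μi + (ρ^2*δ*μi*‖z.2‖^2 + 2*μi*(1-ρ^2) + 2)*δ*μk*‖z.1‖^2) (by fun_prop)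
  refine (tendsto_quadratic_div_sq _ hn (hB.trans_isLittleO (isLittleO_one_of_tendsto_atTop hn))
    ((hC.trans_isLittleO (isLittleO_one_of_tendsto_atTop
      ((tendsto_pow_atTop two_ne_zero).comp hn))).add
      ((isLittleO_norm_sq_add_re_conj_mul hn hu hv hb (2*δ)).const_mul_left (ρ^2*μi*μk)))).congr
    fun t => ?_
  simp only [zki1]
  ring

lemma tendsto_varpiK_div (hN : Tendsto N l atTop) (αk μk β δ : ℝ) {f : T → ℂ} {C : ℝ}
    (hf : ∀ t, ‖f t‖ ≤ C) :
    Tendsto (fun t => varpiK (N t) αk μk β δ (f t) / N t) l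
      (𝓝 (β*αk/((δ+1)*(μk+1)) * (μk+δ+1))) := by
  have hn : Tendsto (fun t => (N t : ℝ)) l atTop := tendsto_natCast_atTop_atTop.comp hN
  refine ((tendsto_add_const_mul_div (μk+δ+1) hn
    ((isBigO_one_comp_of_norm_le hf (φ := fun z => δ*μk*‖z‖^2) (by fun_prop)).trans_isLittleO
      (isLittleO_one_of_tendsto_atTop hn))).const_mul _).congr fun t => ?_
  simp only [varpiK]
  ring

lemma tendsto_xiK_div (hN : Tendsto N l atTop) (hM : Tendsto M l atTop) (αk μk β δ ρ ι κ : ℝ)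
    {f : T → ℂ} {C : ℝ} (hf : ∀ t, ‖f t‖ ≤ C) :
    Tendsto (fun t => xiK (M t) (N t) αk μk β δ ρ ι κ (f t) / ((M t : ℝ) * N t) ^ 2) l
      (𝓝 (β^2*αk^2*κ^2/((δ+1)^2*(μk+1)^2)
        * ((ρ^2*(μk+δ+1)^2 + (1-ρ^2)*δ^2*μk + δ^2) * ι^2))) := by
  have hn : Tendsto (fun t => (N t : ℝ)) l atTop := tendsto_natCast_atTop_atTop.comp hN
  have hlead : Tendsto (fun t => ck1 (N t) μk δ ρ (f t) * ι^2 / (N t : ℝ) ^ 2) l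
      (𝓝 ((ρ^2*(μk+δ+1)^2 + (1-ρ^2)*δ^2*μk + δ^2) * ι^2)) := by
    simpa only [mul_div_right_comm] using (tendsto_ck1_div_sq hN μk δ ρ hf).mul_const (ι^2)
  have hrest := tendsto_quadratic_div_sq (ck2 μk δ ρ ι) hn
    ((isBigO_one_comp_of_norm_le hf (φ := ck3 μk δ ρ ι) (by unfold ck3; fun_prop)).trans_isLittleO
      (isLittleO_one_of_tendsto_atTop hn))
    ((isBigO_one_comp_of_norm_le hf (φ := ck4 μk δ ρ ι) (by unfold ck4; fun_prop)).trans_isLittleO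
      (isLittleO_one_of_tendsto_atTop ((tendsto_pow_atTop two_ne_zero).comp hn)))
  refine ((tendsto_mul_add_div_mul (tendsto_natCast_atTop_atTop.comp hM) hlead hrest).const_mul
    _).congr' ?_
  filter_upwards [hM.eventually_ne_atTop 0] with t ht
  have hM0 : (M t : ℝ) ≠ 0 := Nat.cast_ne_zero.2 ht
  simp only [xiK, Function.comp_apply]
  field_simp
  ring

lemma tendsto_gammaKI_div (hN : Tendsto N l atTop) (hM : Tendsto M l atTop)
    (αk αi μk μi β δ ρ ι κ : ℝ) {u v b : T → ℂ} {C : ℝ}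
    (hu : ∀ t, ‖u t‖ ≤ C) (hv : ∀ t, ‖v t‖ ≤ C) (hb : b =o[l] fun t => (N t : ℝ)) :
    Tendsto (fun t => gammaKI (M t) (N t) αk αi μk μi β δ ρ ι κ (u t) (v t) (b t)
        / ((M t : ℝ) * N t) ^ 2) l
      (𝓝 (κ^2*β^2*αk*αi/((δ+1)^2*(μk+1)*(μi+1)) * ((μi+1-ρ^2*μi)*δ^2 * ι^2))) := by
  have hn : Tendsto (fun t => (N t : ℝ)) l atTop := tendsto_natCast_atTop_atTop.comp hN
  have huv : ∀ t, ‖(u t, v t)‖ ≤ C := fun t => norm_prod_le_iff.2 ⟨hu t, hv t⟩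
  have hlead : Tendsto (fun t => zki1 (N t) μk μi δ ρ (u t) (v t) (b t) * ι^2 / (N t : ℝ) ^ 2) l
      (𝓝 ((μi+1-ρ^2*μi)*δ^2 * ι^2)) := by
    simpa only [mul_div_right_comm] using
      (tendsto_zki1_div_sq hN μk μi δ ρ hu hv hb).mul_const (ι^2)
  have h3 := isBigO_one_comp_of_norm_le (l := l) huv
    (φ := fun z => zki3 μk μi δ ρ ι z.1 z.2) (by unfold zki3; fun_prop)
  have h4 := isBigO_one_comp_of_norm_le (l := l) huv (φ := fun z =>
    ((δ*‖z.2‖^2-2)*ρ^2*μi + 2*μi + 2)*(1-ι^2)*δ*μk*‖z.1‖^2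
      + 2*(1-ι^2)*ρ^2*δ*μi*‖z.2‖^2) (by fun_prop)
  have hz4 : (fun t => zki4 μk μi δ ρ ι (u t) (v t) (b t)) =o[l] fun t => (N t : ℝ) ^ 2 :=
    ((h4.trans_isLittleO (isLittleO_one_of_tendsto_atTop
      ((tendsto_pow_atTop two_ne_zero).comp hn))).add
      ((isLittleO_norm_sq_add_re_conj_mul hn hu hv hb (2*δ)).const_mul_left
        ((1-ι^2)*ρ^2*μk*μi))).congr_left fun t => by simp only [zki4]; ring
  have hrest := tendsto_quadratic_div_sq (zki2 μk μi δ ρ ι) hn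
    (h3.trans_isLittleO (isLittleO_one_of_tendsto_atTop hn)) hz4
  refine ((tendsto_mul_add_div_mul (tendsto_natCast_atTop_atTop.comp hM) hlead hrest).const_mul
    _).congr' ?_
  filter_upwards [hM.eventually_ne_atTop 0] with t ht
  have hM0 : (M t : ℝ) ≠ 0 := Nat.cast_ne_zero.2 ht
  simp only [gammaKI, Function.comp_apply]
  field_simp
  ring

lemma tendsto_zetaV_zero (hN : Tendsto N l atTop) (hM : Tendsto M l atTop) {K : ℕ}
    (Eu β δ ρ κ : ℝ) (α μ : Fin K → ℝ) {f : T → Fin K → ℂ} {C : ℝ} (hf : ∀ t i, ‖f t i‖ ≤ C) :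
    Tendsto (fun t => zetaV K (N t) (fun _ => Eu/((M t : ℝ)*(N t))) α μ β δ ρ κ (f t)) l
      (𝓝 0) := by
  have hn : Tendsto (fun t => (N t : ℝ)) l atTop := tendsto_natCast_atTop_atTop.comp hN
  have hterm : ∀ s : Fin K, Tendsto (fun t => κ^2*Eu*β*α s/((δ+1)*(μ s+1)) * (M t : ℝ)⁻¹
      * ((ρ^2*δ*μ s*‖f t s‖^2 + ((1-ρ^2)*δ*μ s + δ + μ s + 1) * N t) / N t)) l (𝓝 0) := by
    intro s
    simpa using ((tendsto_inv_atTop_zero.comp (tendsto_natCast_atTop_atTop.comp hM)).const_mul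
      (κ^2*Eu*β*α s/((δ+1)*(μ s+1)))).mul (tendsto_add_const_mul_div _ hn
        ((isBigO_one_comp_of_norm_le (fun t => hf t s) (φ := fun z => ρ^2*δ*μ s*‖z‖^2)
          (by fun_prop)).trans_isLittleO (isLittleO_one_of_tendsto_atTop hn)))
  have hsum := tendsto_finsetSum Finset.univ fun s _ => hterm s
  rw [Finset.sum_const_zero] at hsum
  refine hsum.congr fun t => Finset.sum_congr rfl fun s _ => ?_
  ring

lemma tendsto_interference_noise_div (hN : Tendsto N l atTop) (hM : Tendsto M l atTop)
    {K : ℕ} (k : Fin K) (α μ : Fin K → ℝ)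
    (β δ ρ ι κ τ σ2 σRF2 Eu : ℝ) {f b : T → Fin K → ℂ} {C : ℝ} (hf : ∀ t i, ‖f t i‖ ≤ C)
    (hb : ∀ i, i ≠ k → (fun t => b t i) =o[l] fun t => (N t : ℝ)) :
    Tendsto (fun t =>
      ((∑ i ∈ Finset.univ.erase k, Eu/((M t : ℝ)*(N t)) * τ^2
          * gammaKI (M t) (N t) (α k) (α i) (μ k) (μ i) β δ ρ ι κ (f t k) (f t i) (b t i))
        + τ*(1-τ) * varpiK (N t) (α k) (μ k) β δ (f t k)
          * zetaV K (N t) (fun _ => Eu/((M t : ℝ)*(N t))) α μ β δ ρ κ (f t) * (M t : ℝ)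
        + τ*(σRF2+σ2) * varpiK (N t) (α k) (μ k) β δ (f t k) * (M t : ℝ))
      / ((M t : ℝ) * N t)) l
      (𝓝 ((∑ i ∈ Finset.univ.erase k, Eu*τ^2 * (κ^2*β^2*α k*α i/((δ+1)^2*(μ k+1)*(μ i+1))
          * ((μ i+1-ρ^2*μ i)*δ^2 * ι^2)))
        + τ*(σRF2+σ2) * (β*α k/((δ+1)*(μ k+1)) * (μ k+δ+1)))) := by
  have hinterf := tendsto_finsetSum (Finset.univ.erase k) fun i hi =>
    (tendsto_gammaKI_div hN hM (α k) (α i) (μ k) (μ i) β δ ρ ι κ (fun t => hf t k)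
      (fun t => hf t i) (hb i (Finset.ne_of_mem_erase hi))).const_mul (Eu*τ^2)
  have hvarpi := tendsto_varpiK_div hN (α k) (μ k) β δ fun t => hf t k
  have h := (hinterf.add ((hvarpi.mul (tendsto_zetaV_zero hN hM Eu β δ ρ κ α μ hf)).const_mul
    (τ*(1-τ)))).add (hvarpi.const_mul (τ*(σRF2+σ2)))
  rw [mul_zero, mul_zero, add_zero] at h
  refine h.congr' ?_
  filter_upwards [hM.eventually_ne_atTop 0] with t ht
  have hM0 : (M t : ℝ) ≠ 0 := Nat.cast_ne_zero.2 ht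
  rw [add_div, add_div, Finset.sum_div]
  congr 1
  · congr 1
    · refine Finset.sum_congr rfl fun i _ => ?_
      ring
    · field_simp
  · field_simp

end

lemma add_one_sub_sq_mul_pos {ρ μ : ℝ} (hρ : ρ ^ 2 ≤ 1) (hμ : 0 ≤ μ) : 0 < μ + 1 - ρ^2 * μ := by
  nlinarith [mul_nonneg (sub_nonneg.2 hρ) hμ]

lemma limit_signal_pos {ρ μk : ℝ} (δ : ℝ) (hρ : ρ ^ 2 ≤ 1) (hμk : 0 ≤ μk) :
    0 < (ρ^2/δ^2)*(μk+δ+1)^2 + μk + 1 - ρ^2*μk := by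
  have := add_one_sub_sq_mul_pos hρ hμk
  have : 0 ≤ (ρ^2/δ^2)*(μk+δ+1)^2 := by positivity
  linarith

lemma limit_interference_noise_pos {K : ℕ} (k : Fin K) {α μ : Fin K → ℝ}
    {β δ ρ ι κ τ σ2 σRF2 Eu : ℝ}
    (hα : ∀ i, 0 < α i) (hμ : ∀ i, 0 < μ i) (hβ : 0 < β) (hδ : 0 < δ) (hρ : ρ ^ 2 ≤ 1)
    (hι : 0 < ι) (hκ : 0 < κ) (hτ : 0 < τ) (hσ : 0 < σRF2 + σ2) (hEu : 0 < Eu) :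
    0 < (∑ i ∈ Finset.univ.erase k, (α i * (μ k+1)/(α k * (μ i+1))) * (μ i + 1 - ρ^2 * μ i))
      + (σRF2+σ2)*(μ k+δ+1)*(δ+1)*(μ k+1)/(Eu*ι^2*κ^2*τ*β*α k*δ^2) := by
  have := hα k; have := hμ k
  refine add_pos_of_nonneg_of_pos (Finset.sum_nonneg fun i _ => ?_) (by positivity)
  have := hα i; have := hμ i; have := add_one_sub_sq_mul_pos hρ (hμ i).le
  positivity

theorem corollary4_power_scaling_one_over_MN_general
    (K : ℕ) (k : Fin K)
    (α μ : Fin K → ℝ) (β δ ρ ι κ τ σ2 σRF2 : ℝ)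
    (hα : ∀ i, 0 < α i) (hμ : ∀ i, 0 < μ i)
    (hβ : 0 < β) (hδ : 0 < δ)
    (hρ : ρ ∈ Set.Ioo (0:ℝ) 1) (hι : ι ∈ Set.Ioc (0:ℝ) 1) (hκ : κ ∈ Set.Ioc (0:ℝ) 1)
    (hτ : τ ∈ Set.Ioo (0:ℝ) 1) (hσ : 0 < σ2) (hσRF : 0 < σRF2)
    (Mt Nt : ℕ → ℕ) (hMt : Tendsto Mt atTop atTop) (hNt : Tendsto Nt atTop atTop)
    (Eu : ℝ) (hEu : 0 < Eu)
    (f b : ℕ → Fin K → ℂ)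
    (C : ℝ) (hfC : ∀ t i, ‖f t i‖ ≤ C)
    (hb0 : ∀ i, i ≠ k →
      Tendsto (fun t => ‖b t i‖ / (Nt t : ℝ)) atTop (nhds 0)) :
    Tendsto (fun t : ℕ =>
        Rtilde K k (Mt t) (Nt t) (fun _ => Eu/((Mt t : ℝ)*(Nt t : ℝ)))
          α μ β δ ρ ι κ τ σ2 σRF2 (f t) (b t)) atTop
      (nhds (Real.logb 2 (1 +
        ((ρ^2/δ^2)*(μ k+δ+1)^2 + μ k + 1 - ρ^2*μ k) /
        ((∑ i ∈ Finset.univ.erase k,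
            (α i * (μ k+1)/(α k * (μ i+1))) * (μ i + 1 - ρ^2 * μ i))
         + (σRF2+σ2)*(μ k+δ+1)*(δ+1)*(μ k+1)/(Eu*ι^2*κ^2*τ*β*α k*δ^2))))) := by
  have hρ2 : ρ ^ 2 ≤ 1 := by nlinarith [hρ.1, hρ.2]
  have := hι.1; have := hκ.1; have := hτ.1; have := hα k; have := hμ k
  have hX := limit_signal_pos δ hρ2 (hμ k).le
  have hY := limit_interference_noise_pos k hα hμ hβ hδ hρ2 hι.1 hκ.1 hτ.1 (add_pos hσRF hσ) hEu
  -- the factor shared by the limits of the scaled signal and interference-plus-noise terms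
  have hc : Eu*τ^2*ι^2*κ^2*β^2*α k^2*δ^2/((δ+1)^2*(μ k+1)^2) ≠ 0 := by positivity
  rw [← mul_div_mul_left _ _ hc]
  refine (Real.continuousAt_logb ?_).tendsto.comp ((tendsto_div_of_tendsto_div
    (c := fun t => (Mt t : ℝ) * Nt t) ?_ ?_ (mul_ne_zero hc hY.ne') ?_).const_add 1)
  · rw [mul_div_mul_left _ _ hc]
    linarith [div_pos hX hY]
  · convert (tendsto_xiK_div hNt hMt (α k) (μ k) β δ ρ ι κ fun t => hfC t k).const_mul
      (Eu*τ^2) using 2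
    · ring
    · field_simp
      ring
  · convert tendsto_interference_noise_div hNt hMt k α μ β δ ρ ι κ τ σ2 σRF2 Eu hfC
      fun i hi => isLittleO_of_tendsto_norm_div (tendsto_natCast_atTop_atTop.comp hNt) (hb0 i hi)
      using 2
    rw [mul_add, Finset.mul_sum]
    congr 1
    · refine Finset.sum_congr rfl fun i _ => ?_
      have := hμ i
      field_simp
    · field_simp
  · filter_upwards [hMt.eventually_ne_atTop 0, hNt.eventually_ne_atTop 0] with t hM hN
    positivity

/-- Corollary 4: power scaling `p_i = E_u/(MN)` with no user aligned;
as `M, N → ∞` the closed-form rate converges to the limit of eq. (30). -/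
theorem corollary4_power_scaling_one_over_MN
    (K : ℕ) (hK : 2 ≤ K) (k : Fin K)
    (α μ : Fin K → ℝ) (β δ ρ ι κ τ σ2 σRF2 : ℝ)
    (hα : ∀ i, 0 < α i) (hμ : ∀ i, 0 < μ i)
    (hβ : 0 < β) (hδ : 0 < δ)
    (hρ : ρ ∈ Set.Ioo (0:ℝ) 1) (hι : ι ∈ Set.Ioc (0:ℝ) 1) (hκ : κ ∈ Set.Ioc (0:ℝ) 1)
    (hτ : τ ∈ Set.Ioo (0:ℝ) 1) (hσ : 0 < σ2) (hσRF : 0 < σRF2)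
    (Mt Nt : ℕ → ℕ) (hMt : Tendsto Mt atTop atTop) (hNt : Tendsto Nt atTop atTop)
    (Eu : ℝ) (hEu : 0 < Eu)
    (f b : ℕ → Fin K → ℂ)
    (hf_adm : ∀ t i, ‖f t i‖ ≤ Nt t)
    (hb_adm : ∀ t, ∀ i, i ≠ k → ‖b t i‖ ≤ Nt t)
    (C : ℝ) (hC : 0 < C) (hfC : ∀ t i, ‖f t i‖ ≤ C)
    (hb0 : ∀ i, i ≠ k →
      Tendsto (fun t => ‖b t i‖ / (Nt t : ℝ)) atTop (nhds 0)) :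
    Tendsto (fun t : ℕ =>
        Rtilde K k (Mt t) (Nt t) (fun _ => Eu/((Mt t : ℝ)*(Nt t : ℝ)))
          α μ β δ ρ ι κ τ σ2 σRF2 (f t) (b t)) atTop
      (nhds (Real.logb 2 (1 +
        ((ρ^2/δ^2)*(μ k+δ+1)^2 + μ k + 1 - ρ^2*μ k) /
        ((∑ i ∈ Finset.univ.erase k,
            (α i * (μ k+1)/(α k * (μ i+1))) * (μ i + 1 - ρ^2 * μ i))
         + (σRF2+σ2)*(μ k+δ+1)*(δ+1)*(μ k+1)/(Eu*ι^2*κ^2*τ*β*α k*δ^2))))) :=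
  corollary4_power_scaling_one_over_MN_general K k α μ β δ ρ ι κ τ σ2 σRF2 hα hμ hβ hδ hρ hι hκ hτ
    hσ hσRF Mt Nt hMt hNt Eu hEu f b C hfC hb0

end
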